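/- arXiv:0904.2683 — 5 statements merged into one kernel-verified Lean document; each statement's English description precedes it below -/
import Mathlib

section
/- Let X₁ = [[A,B],[C,D]] be an (n₁+p)×(n₁+p) complex block matrix and X₂ = [[E,F],[G,H]] an (m₁+p)×(m₁+p) complex block matrix, and let V be an invertible p×p complex matrix. Assume D, H are invertible and 1 - V⁻¹HVD is invertible, and set K₁ = (1 - VDV⁻¹H)⁻¹V and K₂ = (1 - V⁻¹HVD)⁻¹V⁻¹. Then the Schur complement of the block T = [[D, -V⁻¹],[-V, H]] in the (n₁+m₁+2p)-dimensional matrix L = fromBlocks of [[A,B,0,0],[C,D,0,-V⁻¹],[0,0,E,F],[0,-V,G,H]] (with respect to the external indices) equals the generalized star product [[A + B K₂ H V C, B K₂ G],[F K₁ C, E + F K₁ D V⁻¹ G]]. -/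
open Matrix

theorem schur_complement_eq_star_product (n₁ m₁ p : ℕ)
    (A : Matrix (Fin n₁) (Fin n₁) ℂ) (B : Matrix (Fin n₁) (Fin p) ℂ)
    (C : Matrix (Fin p) (Fin n₁) ℂ) (D : Matrix (Fin p) (Fin p) ℂ)
    (E : Matrix (Fin m₁) (Fin m₁) ℂ) (F : Matrix (Fin m₁) (Fin p) ℂ)
    (G : Matrix (Fin p) (Fin m₁) ℂ) (H : Matrix (Fin p) (Fin p) ℂ)
    (V : Matrix (Fin p) (Fin p) ℂ)
    (hV : IsUnit V) (hD : IsUnit D) (hH : IsUnit H)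
    (h : IsUnit (1 - V⁻¹ * H * V * D)) :
    Matrix.fromBlocks A 0 0 E
        - Matrix.fromBlocks B 0 0 F
            * (Matrix.fromBlocks D (-V⁻¹) (-V) H)⁻¹
            * Matrix.fromBlocks C 0 0 G
      = Matrix.fromBlocks
          (A + B * ((1 - V⁻¹ * H * V * D)⁻¹ * V⁻¹) * H * V * C)
          (B * ((1 - V⁻¹ * H * V * D)⁻¹ * V⁻¹) * G)
          (F * ((1 - V * D * V⁻¹ * H)⁻¹ * V) * C)
          (E + F * ((1 - V * D * V⁻¹ * H)⁻¹ * V) * D * V⁻¹ * G) := by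
  set P := (1 - V⁻¹ * H * V * D)⁻¹ with hPdef
  set Q := (1 - V * D * V⁻¹ * H)⁻¹ with hQdef
  have hVV : V * V⁻¹ = 1 := mul_nonsing_inv V ((isUnit_iff_isUnit_det V).mp hV)
  have hVV' : V⁻¹ * V = 1 := nonsing_inv_mul V ((isUnit_iff_isUnit_det V).mp hV)
  have hP1 : (1 - V⁻¹ * H * V * D) * P = 1 :=
    mul_nonsing_inv _ ((isUnit_iff_isUnit_det _).mp h)
  have hP2 : P * (1 - V⁻¹ * H * V * D) = 1 :=
    nonsing_inv_mul _ ((isUnit_iff_isUnit_det _).mp h)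
  -- (1 - V*D*V⁻¹*H) is invertible, with explicit inverse witness
  have hYkey : (1 - V * D * V⁻¹ * H) * (1 + V * D * P * (V⁻¹ * H)) = 1 := by
    have expand : (1 - V * D * V⁻¹ * H) * (1 + V * D * P * (V⁻¹ * H))
        = 1 + V * D * (((1 - V⁻¹ * H * V * D) * P) - 1) * (V⁻¹ * H) := by
      noncomm_ring
    rw [expand, hP1]; noncomm_ring
  have hYdet : IsUnit (1 - V * D * V⁻¹ * H).det := isUnit_det_of_right_inverse hYkey
  have hQ1 : (1 - V * D * V⁻¹ * H) * Q = 1 := mul_nonsing_inv _ hYdet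
  have hQ2 : Q * (1 - V * D * V⁻¹ * H) = 1 := nonsing_inv_mul _ hYdet
  -- intertwining identities
  have hDP : D * P = V⁻¹ * Q * V * D := by
    have step : (1 - V * D * V⁻¹ * H) * (V * D * P) = V * D := by
      have e : (1 - V * D * V⁻¹ * H) * (V * D * P)
          = V * D * ((1 - V⁻¹ * H * V * D) * P) := by noncomm_ring
      rw [e, hP1, mul_one]
    calc D * P = (V⁻¹ * V) * (D * P) := by rw [hVV', one_mul]
      _ = V⁻¹ * ((Q * (1 - V * D * V⁻¹ * H)) * (V * D * P)) := by
            rw [hQ2, one_mul]; noncomm_ring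
      _ = V⁻¹ * (Q * ((1 - V * D * V⁻¹ * H) * (V * D * P))) := by
            rw [mul_assoc Q]
      _ = V⁻¹ * Q * V * D := by rw [step]; noncomm_ring
  have hHQ : H * Q = V * P * V⁻¹ * H := by
    have step : (V * P * V⁻¹ * H) * (1 - V * D * V⁻¹ * H) = H := by
      have e : (V * P * V⁻¹ * H) * (1 - V * D * V⁻¹ * H)
          = V * (P * (1 - V⁻¹ * H * V * D)) * (V⁻¹ * H) := by
        noncomm_ring
      rw [e, hP2, mul_one, ← mul_assoc, hVV, one_mul]
    calc H * Q = ((V * P * V⁻¹ * H) * (1 - V * D * V⁻¹ * H)) * Q := by rw [step]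
      _ = (V * P * V⁻¹ * H) * ((1 - V * D * V⁻¹ * H) * Q) := by
            rw [mul_assoc]
      _ = V * P * V⁻¹ * H := by rw [hQ1, mul_one]
  -- the explicit inverse of the interaction block
  have hTM : (Matrix.fromBlocks D (-V⁻¹) (-V) H)
      * (Matrix.fromBlocks (-(P * (V⁻¹ * H * V))) (-(P * V⁻¹)) (-(Q * V))
          (-(Q * (V * D * V⁻¹)))) = 1 := by
    rw [Matrix.fromBlocks_multiply]
    have e11 : D * -(P * (V⁻¹ * H * V)) + -V⁻¹ * -(Q * V) = 1 := by
      have e : D * -(P * (V⁻¹ * H * V)) + -V⁻¹ * -(Q * V)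
          = -(D * P * (V⁻¹ * H * V)) + V⁻¹ * (Q * V) := by noncomm_ring
      rw [e, hDP]
      have e2 : -(V⁻¹ * Q * V * D * (V⁻¹ * H * V)) + V⁻¹ * (Q * V)
          = V⁻¹ * ((Q * (1 - V * D * V⁻¹ * H)) * V) := by noncomm_ring
      rw [e2, hQ2, one_mul, hVV']
    have e12 : D * -(P * V⁻¹) + -V⁻¹ * -(Q * (V * D * V⁻¹)) = 0 := by
      have e : D * -(P * V⁻¹) + -V⁻¹ * -(Q * (V * D * V⁻¹))
          = -(D * P * V⁻¹) + V⁻¹ * Q * V * D * V⁻¹ := by noncomm_ring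
      rw [e, hDP]; noncomm_ring
    have e21 : -V * -(P * (V⁻¹ * H * V)) + H * -(Q * V) = 0 := by
      have e : -V * -(P * (V⁻¹ * H * V)) + H * -(Q * V)
          = V * P * V⁻¹ * H * V - (H * Q) * V := by noncomm_ring
      rw [e, hHQ]; noncomm_ring
    have e22 : -V * -(P * V⁻¹) + H * -(Q * (V * D * V⁻¹)) = 1 := by
      have e : -V * -(P * V⁻¹) + H * -(Q * (V * D * V⁻¹))
          = V * (P * V⁻¹) - (H * Q) * (V * D * V⁻¹) := by noncomm_ring
      rw [e, hHQ]
      have e2 : V * (P * V⁻¹) - V * P * V⁻¹ * H * (V * D * V⁻¹)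
          = V * (P * (1 - V⁻¹ * H * V * D)) * V⁻¹ := by noncomm_ring
      rw [e2, hP2, mul_one, hVV]
    rw [e11, e12, e21, e22, Matrix.fromBlocks_one]
  have hTinv : (Matrix.fromBlocks D (-V⁻¹) (-V) H)⁻¹
      = Matrix.fromBlocks (-(P * (V⁻¹ * H * V))) (-(P * V⁻¹)) (-(Q * V))
          (-(Q * (V * D * V⁻¹))) := inv_eq_right_inv hTM
  rw [hTinv, Matrix.fromBlocks_multiply, Matrix.fromBlocks_multiply, sub_eq_add_neg,
    Matrix.fromBlocks_neg, Matrix.fromBlocks_add]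
  refine Matrix.fromBlocks_inj.mpr ⟨?_, ?_, ?_, ?_⟩ <;>
    simp [Matrix.mul_assoc]
end

section
/- Let X₁, X₂, V be as in the definition of the generalized star product, with X₁, X₂ unitary (as matrices over ℂ) and V unitary, and assume the matrix T = [[D,-V⁻¹],[-V,H]] built from the lower-right block D of X₁ and the lower-right block H of X₂ is invertible. Then the generalized star product X₁ ⋆_V X₂ = [[A + BK₂HVC, BK₂G],[FK₁C, E + FK₁DV⁻¹G]] is unitary. -/
open Matrix

/-- In a ring, if `1 - a*b` is a unit then so is `1 - b*a`. -/
lemma isUnit_one_sub_swap {R : Type*} [Ring R] {a b : R} (h : IsUnit (1 - a*b)) :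
    IsUnit (1 - b*a) := by
  obtain ⟨u, hu⟩ := h
  have hc1 : (1 - a*b) * ↑u⁻¹ = 1 := by rw [← hu]; exact u.mul_inv
  have hc2 : (↑u⁻¹ : R) * (1 - a*b) = 1 := by rw [← hu]; exact u.inv_mul
  set c : R := ↑u⁻¹
  have h1 : (1 - b*a) * (1 + b*c*a) = 1 + b*((1-a*b)*c)*a - b*a := by noncomm_ring
  have h2 : (1 + b*c*a) * (1 - b*a) = 1 + b*(c*(1-a*b))*a - b*a := by noncomm_ring
  rw [hc1] at h1; rw [hc2] at h2
  simp only [mul_one, one_mul, add_sub_cancel_right] at h1 h2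
  exact ⟨⟨1 - b*a, 1 + b*c*a, h1, h2⟩, rfl⟩

/-- Push a factor through an inverse: `X (1 - YX)⁻¹ = (1 - XY)⁻¹ X`. -/
lemma shift_inv {n : Type*} [Fintype n] [DecidableEq n] (X Y : Matrix n n ℂ)
    (h1 : IsUnit (1 - X*Y)) (h2 : IsUnit (1 - Y*X)) :
    X * (1 - Y*X)⁻¹ = (1 - X*Y)⁻¹ * X := by
  have d1 : IsUnit (1 - X*Y).det := (Matrix.isUnit_iff_isUnit_det _).1 h1
  have d2 : IsUnit (1 - Y*X).det := (Matrix.isUnit_iff_isUnit_det _).1 h2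
  have key : (1 - X*Y) * (X * (1 - Y*X)⁻¹) = X := by
    have : (1 - X*Y) * X = X * (1 - Y*X) := by noncomm_ring
    rw [← Matrix.mul_assoc, this, Matrix.mul_assoc, Matrix.mul_nonsing_inv _ d2, Matrix.mul_one]
  calc X * (1 - Y*X)⁻¹ = ((1 - X*Y)⁻¹ * (1 - X*Y)) * (X * (1 - Y*X)⁻¹) := by
        rw [Matrix.nonsing_inv_mul _ d1, Matrix.one_mul]
    _ = (1 - X*Y)⁻¹ * X := by rw [Matrix.mul_assoc, key]

/-- Abstract unitarity of a feedback (Redheffer) connection. -/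
lemma key_unitary {ι κ : Type*} [Fintype ι] [Fintype κ] [DecidableEq ι] [DecidableEq κ]
    (P : Matrix ι ι ℂ) (Q : Matrix ι κ ℂ) (R : Matrix κ ι ℂ) (Sd J N : Matrix κ κ ℂ)
    (h1 : Pᴴ * P + Rᴴ * R = 1)
    (h2 : Pᴴ * Q + Rᴴ * Sd = 0)
    (h3 : Qᴴ * Q + Sdᴴ * Sd = 1)
    (hJ : Jᴴ * J = 1)
    (hSN : (J - Sd) * N = 1) :
    (P + Q * N * R)ᴴ * (P + Q * N * R) = 1 := by
  set S : Matrix κ κ ℂ := J - Sd with hSdef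
  have hNSH : Nᴴ * Sᴴ = 1 := by rw [← conjTranspose_mul, hSN, conjTranspose_one]
  have hJeq : S + Sd = J := sub_add_cancel J Sd
  have Zeq : Nᴴ * N = 1 + Sd * N + Nᴴ * Sdᴴ + Nᴴ * (Sdᴴ * (Sd * N)) := by
    calc Nᴴ * N = Nᴴ * ((S + Sd)ᴴ * ((S + Sd) * N)) := by
          rw [hJeq, ← Matrix.mul_assoc Jᴴ, hJ, Matrix.one_mul]
      _ = _ := by
          simp only [conjTranspose_add, Matrix.add_mul, Matrix.mul_add, Matrix.mul_assoc]
          rw [hSN]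
          simp only [Matrix.mul_one]
          rw [← Matrix.mul_assoc Nᴴ Sᴴ (Sd * N), hNSH, Matrix.one_mul]
          abel
  have ZeqX : ∀ (x : Matrix κ ι ℂ), Nᴴ * (N * x)
      = x + Sd * (N * x) + Nᴴ * (Sdᴴ * x) + Nᴴ * (Sdᴴ * (Sd * (N * x))) := fun x => by
    rw [← Matrix.mul_assoc Nᴴ N, Zeq]
    simp only [Matrix.add_mul, Matrix.one_mul, Matrix.mul_assoc]
  have hPP : Pᴴ * P = 1 - Rᴴ * R := eq_sub_of_add_eq h1
  have hPQ : ∀ (x : Matrix κ ι ℂ), Pᴴ * (Q * x) = -(Rᴴ * (Sd * x)) := fun x => by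
    have : Pᴴ * Q = -(Rᴴ * Sd) := eq_neg_of_add_eq_zero_left h2
    rw [← Matrix.mul_assoc, this, Matrix.neg_mul, Matrix.mul_assoc]
  have hQP : Qᴴ * P = -(Sdᴴ * R) := by
    have := congrArg conjTranspose h2
    simpa [conjTranspose_add, conjTranspose_mul, add_comm] using
      eq_neg_of_add_eq_zero_left (by simpa [conjTranspose_add, conjTranspose_mul] using this)
  have hQQ : ∀ (x : Matrix κ ι ℂ), Qᴴ * (Q * x) = x - Sdᴴ * (Sd * x) := fun x => by
    have : Qᴴ * Q = 1 - Sdᴴ * Sd := eq_sub_of_add_eq h3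
    rw [← Matrix.mul_assoc, this, Matrix.sub_mul, Matrix.one_mul, Matrix.mul_assoc]
  simp only [conjTranspose_add, conjTranspose_mul, Matrix.add_mul, Matrix.mul_add,
    Matrix.mul_assoc, hPP, hPQ, hQP, hQQ, ZeqX, Matrix.mul_neg, Matrix.neg_mul,
    Matrix.mul_sub, Matrix.sub_mul]
  abel

theorem star_product_unitary (n₁ m₁ p : ℕ)
    (A : Matrix (Fin n₁) (Fin n₁) ℂ) (B : Matrix (Fin n₁) (Fin p) ℂ)
    (C : Matrix (Fin p) (Fin n₁) ℂ) (D : Matrix (Fin p) (Fin p) ℂ)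
    (E : Matrix (Fin m₁) (Fin m₁) ℂ) (F : Matrix (Fin m₁) (Fin p) ℂ)
    (G : Matrix (Fin p) (Fin m₁) ℂ) (H : Matrix (Fin p) (Fin p) ℂ)
    (V : Matrix (Fin p) (Fin p) ℂ)
    (hX₁ : Matrix.fromBlocks A B C D ∈ Matrix.unitaryGroup (Fin n₁ ⊕ Fin p) ℂ)
    (hX₂ : Matrix.fromBlocks E F G H ∈ Matrix.unitaryGroup (Fin m₁ ⊕ Fin p) ℂ)
    (hV : V ∈ Matrix.unitaryGroup (Fin p) ℂ)
    (hT : IsUnit (Matrix.fromBlocks D (-V⁻¹) (-V) H)) :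
    Matrix.fromBlocks
        (A + B * ((1 - V⁻¹ * H * V * D)⁻¹ * V⁻¹) * H * V * C)
        (B * ((1 - V⁻¹ * H * V * D)⁻¹ * V⁻¹) * G)
        (F * ((1 - V * D * V⁻¹ * H)⁻¹ * V) * C)
        (E + F * ((1 - V * D * V⁻¹ * H)⁻¹ * V) * D * V⁻¹ * G)
      ∈ Matrix.unitaryGroup (Fin n₁ ⊕ Fin m₁) ℂ := by
  -- facts about V
  have hVsV : Vᴴ * V = 1 := by
    have := Matrix.mem_unitaryGroup_iff'.mp hV; rwa [star_eq_conjTranspose] at this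
  have hVVs : V * Vᴴ = 1 := by
    have := Matrix.mem_unitaryGroup_iff.mp hV; rwa [star_eq_conjTranspose] at this
  have hVinv : V⁻¹ = Vᴴ := Matrix.inv_eq_left_inv hVsV
  have hV'V : V⁻¹ * V = 1 := by rw [hVinv]; exact hVsV
  have hVV' : V * V⁻¹ = 1 := by rw [hVinv]; exact hVVs
  -- block relations from unitarity of X₁ and X₂
  have hU1 : (Matrix.fromBlocks A B C D)ᴴ * (Matrix.fromBlocks A B C D) = 1 := by
    have := Matrix.mem_unitaryGroup_iff'.mp hX₁; rwa [star_eq_conjTranspose] at this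
  have hU2 : (Matrix.fromBlocks E F G H)ᴴ * (Matrix.fromBlocks E F G H) = 1 := by
    have := Matrix.mem_unitaryGroup_iff'.mp hX₂; rwa [star_eq_conjTranspose] at this
  rw [Matrix.fromBlocks_conjTranspose, Matrix.fromBlocks_multiply, ← Matrix.fromBlocks_one] at hU1 hU2
  have x11 : Aᴴ * A + Cᴴ * C = 1 := by simpa only [Matrix.toBlocks_fromBlocks₁₁] using congrArg Matrix.toBlocks₁₁ hU1
  have x12 : Aᴴ * B + Cᴴ * D = 0 := by simpa only [Matrix.toBlocks_fromBlocks₁₂] using congrArg Matrix.toBlocks₁₂ hU1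
  have x22 : Bᴴ * B + Dᴴ * D = 1 := by simpa only [Matrix.toBlocks_fromBlocks₂₂] using congrArg Matrix.toBlocks₂₂ hU1
  have y11 : Eᴴ * E + Gᴴ * G = 1 := by simpa only [Matrix.toBlocks_fromBlocks₁₁] using congrArg Matrix.toBlocks₁₁ hU2
  have y12 : Eᴴ * F + Gᴴ * H = 0 := by simpa only [Matrix.toBlocks_fromBlocks₁₂] using congrArg Matrix.toBlocks₁₂ hU2
  have y22 : Fᴴ * F + Hᴴ * H = 1 := by simpa only [Matrix.toBlocks_fromBlocks₂₂] using congrArg Matrix.toBlocks₂₂ hU2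
  -- invertibility of the relevant 1 - ⋯ matrices
  have hVu : IsUnit V := ⟨⟨V, V⁻¹, hVV', hV'V⟩, rfl⟩
  haveI : Invertible V := V.invertibleOfIsUnitDet ((Matrix.isUnit_iff_isUnit_det V).mp hVu)
  have hPmInv : (Matrix.fromBlocks (0 : Matrix (Fin p) (Fin p) ℂ) (-1 : Matrix (Fin p) (Fin p) ℂ) (1 : Matrix (Fin p) (Fin p) ℂ) 0) *
      (Matrix.fromBlocks (0 : Matrix (Fin p) (Fin p) ℂ) (1 : Matrix (Fin p) (Fin p) ℂ) (-1 : Matrix (Fin p) (Fin p) ℂ) 0) = 1 := by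
    rw [Matrix.fromBlocks_multiply, ← Matrix.fromBlocks_one]
    congr 1 <;> simp
  have hPmu : IsUnit (Matrix.fromBlocks (0 : Matrix (Fin p) (Fin p) ℂ) (-1 : Matrix (Fin p) (Fin p) ℂ) (1 : Matrix (Fin p) (Fin p) ℂ) 0) :=
    ⟨⟨_, _, hPmInv, mul_eq_one_comm.mp hPmInv⟩, rfl⟩
  have hPmT : (Matrix.fromBlocks (0 : Matrix (Fin p) (Fin p) ℂ) (-1 : Matrix (Fin p) (Fin p) ℂ) (1 : Matrix (Fin p) (Fin p) ℂ) 0) *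
      (Matrix.fromBlocks D (-V⁻¹) (-V) H) = Matrix.fromBlocks V (-H) D (-V⁻¹) := by
    rw [Matrix.fromBlocks_multiply]
    congr 1 <;> simp
  have hu' : IsUnit (Matrix.fromBlocks V (-H) D (-V⁻¹)) := hPmT ▸ hPmu.mul hT
  have hdet : IsUnit (Matrix.fromBlocks V (-H) D (-V⁻¹)).det :=
    (Matrix.isUnit_iff_isUnit_det _).mp hu'
  rw [Matrix.det_fromBlocks₁₁, Matrix.invOf_eq_nonsing_inv] at hdet
  have hre : (-V⁻¹) - D * V⁻¹ * (-H) = -(V⁻¹ * (1 - V*D*V⁻¹*H)) := by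
    have h9 : V⁻¹ * (1 - V*D*V⁻¹*H) = V⁻¹ - D*V⁻¹*H := by
      rw [Matrix.mul_sub, Matrix.mul_one]
      simp only [← Matrix.mul_assoc]
      rw [hV'V, Matrix.one_mul]
    rw [h9]
    simp only [sub_eq_add_neg, Matrix.mul_neg, neg_add_rev, neg_neg]
    abel
  rw [hre, Matrix.det_neg, Matrix.det_mul] at hdet
  have u₁ : IsUnit (1 - V*D*V⁻¹*H) := by
    rw [Matrix.isUnit_iff_isUnit_det]
    have := (IsUnit.mul_iff.mp ((IsUnit.mul_iff.mp hdet).2)).2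
    exact (IsUnit.mul_iff.mp this).2
  have u₂ : IsUnit (1 - V⁻¹*H*V*D) := by
    have : IsUnit (1 - (V*D)*(V⁻¹*H)) := by
      have := u₁; simp only [Matrix.mul_assoc] at this ⊢; exact this
    have := isUnit_one_sub_swap this
    simp only [Matrix.mul_assoc] at this ⊢; exact this
  have u₃ : IsUnit (1 - H*(V*(D*V⁻¹))) := by
    have : IsUnit (1 - (V*(D*V⁻¹))*H) := by
      have := u₁; simp only [Matrix.mul_assoc] at this ⊢; exact this
    exact isUnit_one_sub_swap this
  have u₄ : IsUnit (1 - D*(V⁻¹*(H*V))) := by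
    have : IsUnit (1 - (V⁻¹*(H*V))*D) := by
      have := u₂; simp only [Matrix.mul_assoc] at this ⊢; exact this
    exact isUnit_one_sub_swap this
  -- normalized abbreviations
  have uW2 : IsUnit (1 - V⁻¹*(H*(V*D))) := by
    have := u₂; simp only [Matrix.mul_assoc] at this ⊢; exact this
  have uW1 : IsUnit (1 - V*(D*(V⁻¹*H))) := by
    have := u₁; simp only [Matrix.mul_assoc] at this ⊢; exact this
  have uW1' : IsUnit (1 - (V*D)*(V⁻¹*H)) := by
    have := u₁; simp only [Matrix.mul_assoc] at this ⊢; exact this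
  have uW2' : IsUnit (1 - (V⁻¹*H)*(V*D)) := by
    have := u₂; simp only [Matrix.mul_assoc] at this ⊢; exact this
  have uW2'' : IsUnit (1 - (V⁻¹*(H*V))*D) := by
    have := u₂; simp only [Matrix.mul_assoc] at this ⊢; exact this
  have uW4' : IsUnit (1 - (D*(V⁻¹*H))*V) := by
    have := u₄; simp only [Matrix.mul_assoc] at this ⊢; exact this
  -- exchange identities (normalized)
  have e4 : D * (1 - V⁻¹*(H*(V*D)))⁻¹ = (1 - D*(V⁻¹*(H*V)))⁻¹ * D := by
    have := shift_inv D (V⁻¹*(H*V)) u₄ uW2''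
    simpa only [Matrix.mul_assoc] using this
  have e3 : V * (1 - D*(V⁻¹*(H*V)))⁻¹ = (1 - V*(D*(V⁻¹*H)))⁻¹ * V := by
    have := shift_inv V (D*(V⁻¹*H)) uW1 uW4'
    simpa only [Matrix.mul_assoc] using this
  have e1 : V⁻¹*(H*(1 - V*(D*(V⁻¹*H)))⁻¹) = (1 - V⁻¹*(H*(V*D)))⁻¹ * (V⁻¹*H) := by
    have := shift_inv (V⁻¹*H) (V*D) uW2' uW1'
    simpa only [Matrix.mul_assoc] using this
  -- pointwise versions
  have hVV'x : ∀ (x : Matrix (Fin p) (Fin p) ℂ), V*(V⁻¹*x) = x := fun x => by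
    rw [← Matrix.mul_assoc, hVV', Matrix.one_mul]
  have hV'Vx : ∀ (x : Matrix (Fin p) (Fin p) ℂ), V⁻¹*(V*x) = x := fun x => by
    rw [← Matrix.mul_assoc, hV'V, Matrix.one_mul]
  have r_e4 : ∀ (x : Matrix (Fin p) (Fin p) ℂ),
      D * ((1 - V⁻¹*(H*(V*D)))⁻¹ * x) = (1 - D*(V⁻¹*(H*V)))⁻¹ * (D * x) := fun x => by
    rw [← Matrix.mul_assoc, e4, Matrix.mul_assoc]
  have r_e1 : ∀ (x : Matrix (Fin p) (Fin p) ℂ),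
      H * ((1 - V*(D*(V⁻¹*H)))⁻¹ * x) = V * ((1 - V⁻¹*(H*(V*D)))⁻¹ * (V⁻¹*(H*x))) := fun x => by
    have base : H * (1 - V*(D*(V⁻¹*H)))⁻¹ = V * ((1 - V⁻¹*(H*(V*D)))⁻¹ * (V⁻¹*H)) := by
      rw [← e1, hVV'x]
    rw [← Matrix.mul_assoc, base]
    simp only [Matrix.mul_assoc]
  have r_e2 : ∀ (x : Matrix (Fin p) (Fin p) ℂ),
      V * (D * ((1 - V⁻¹*(H*(V*D)))⁻¹ * x)) = (1 - V*(D*(V⁻¹*H)))⁻¹ * (V * (D * x)) := fun x => by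
    rw [r_e4, ← Matrix.mul_assoc, e3, Matrix.mul_assoc]
  have dW4 : IsUnit (1 - D*(V⁻¹*(H*V))).det := (Matrix.isUnit_iff_isUnit_det _).mp u₄
  have dW2 : IsUnit (1 - V⁻¹*(H*(V*D))).det := (Matrix.isUnit_iff_isUnit_det _).mp uW2
  have r_w4 : (1 - D*(V⁻¹*(H*V)))⁻¹ * (D*(V⁻¹*(H*V))) = (1 - D*(V⁻¹*(H*V)))⁻¹ - 1 := by
    have := Matrix.nonsing_inv_mul _ dW4
    rw [Matrix.mul_sub, Matrix.mul_one] at this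
    rw [sub_eq_iff_eq_add] at this
    conv_rhs => rw [this]
    abel
  have r_w2 : ∀ (x : Matrix (Fin p) (Fin p) ℂ),
      (1 - V⁻¹*(H*(V*D)))⁻¹ * (V⁻¹*(H*(V*(D*x))))
        = (1 - V⁻¹*(H*(V*D)))⁻¹ * x - x := fun x => by
    have h0 := Matrix.nonsing_inv_mul _ dW2
    rw [Matrix.mul_sub, Matrix.mul_one, sub_eq_iff_eq_add] at h0
    have h1 : (1 - V⁻¹*(H*(V*D)))⁻¹ * (V⁻¹*(H*(V*D))) * x
        = (1 - V⁻¹*(H*(V*D)))⁻¹ * x - x := by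
      conv_rhs => rw [h0]
      simp only [Matrix.add_mul, Matrix.one_mul]
      abel
    rw [← h1]
    simp only [Matrix.mul_assoc]
  -- the big block matrices
  set P : Matrix (Fin n₁ ⊕ Fin m₁) (Fin n₁ ⊕ Fin m₁) ℂ := Matrix.fromBlocks A 0 0 E with hP
  set Q : Matrix (Fin n₁ ⊕ Fin m₁) (Fin p ⊕ Fin p) ℂ := Matrix.fromBlocks B 0 0 F with hQ
  set R : Matrix (Fin p ⊕ Fin p) (Fin n₁ ⊕ Fin m₁) ℂ := Matrix.fromBlocks C 0 0 G with hR
  set Sd : Matrix (Fin p ⊕ Fin p) (Fin p ⊕ Fin p) ℂ := Matrix.fromBlocks D 0 0 H with hSd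
  set J : Matrix (Fin p ⊕ Fin p) (Fin p ⊕ Fin p) ℂ := Matrix.fromBlocks 0 V⁻¹ V 0 with hJdef
  set N : Matrix (Fin p ⊕ Fin p) (Fin p ⊕ Fin p) ℂ :=
    Matrix.fromBlocks (((1 - V⁻¹ * H * V * D)⁻¹ * V⁻¹) * H * V) ((1 - V⁻¹ * H * V * D)⁻¹ * V⁻¹)
      ((1 - V * D * V⁻¹ * H)⁻¹ * V) (((1 - V * D * V⁻¹ * H)⁻¹ * V) * D * V⁻¹) with hN
  have bh1 : Pᴴ * P + Rᴴ * R = 1 := by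
    rw [hP, hR, Matrix.fromBlocks_conjTranspose, Matrix.fromBlocks_conjTranspose,
      Matrix.fromBlocks_multiply, Matrix.fromBlocks_multiply, Matrix.fromBlocks_add,
      ← Matrix.fromBlocks_one]
    congr 1 <;> simp [x11, y11]
  have bh2 : Pᴴ * Q + Rᴴ * Sd = 0 := by
    rw [hP, hQ, hR, hSd, Matrix.fromBlocks_conjTranspose, Matrix.fromBlocks_conjTranspose,
      Matrix.fromBlocks_multiply, Matrix.fromBlocks_multiply, Matrix.fromBlocks_add,
      ← Matrix.fromBlocks_zero]
    congr 1 <;> simp [x12, y12]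
  have bh3 : Qᴴ * Q + Sdᴴ * Sd = 1 := by
    rw [hQ, hSd, Matrix.fromBlocks_conjTranspose, Matrix.fromBlocks_conjTranspose,
      Matrix.fromBlocks_multiply, Matrix.fromBlocks_multiply, Matrix.fromBlocks_add,
      ← Matrix.fromBlocks_one]
    congr 1 <;> simp [x22, y22]
  have bhJ : Jᴴ * J = 1 := by
    rw [hJdef, Matrix.fromBlocks_conjTranspose, Matrix.fromBlocks_multiply,
      ← Matrix.fromBlocks_one]
    congr 1 <;> simp [hVinv, hVVs, hVsV]
  have hJS : J - Sd = Matrix.fromBlocks (-D) V⁻¹ V (-H) := by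
    rw [hJdef, hSd, sub_eq_add_neg, Matrix.fromBlocks_neg, Matrix.fromBlocks_add]
    congr 1 <;> simp
  have bhSN : (J - Sd) * N = 1 := by
    rw [hJS, hN, Matrix.fromBlocks_multiply, ← Matrix.fromBlocks_one, Matrix.fromBlocks_inj]
    refine ⟨?_, ?_, ?_, ?_⟩
    · -- -D * n11 + V⁻¹ * n21 = 1
      simp only [Matrix.neg_mul, Matrix.mul_assoc]
      rw [r_e4, r_w4, ← e3, hV'Vx]
      abel
    · -- -D * n12 + V⁻¹ * n22 = 0
      simp only [Matrix.neg_mul, Matrix.mul_assoc]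
      rw [← r_e2, hV'Vx]
      abel
    · -- V * n11 + -H * n21 = 0
      simp only [Matrix.neg_mul, Matrix.mul_assoc]
      rw [r_e1]
      abel
    · -- V * n12 + -H * n22 = 1
      simp only [Matrix.neg_mul, Matrix.mul_assoc]
      rw [r_e1, r_w2]
      simp only [Matrix.mul_sub]
      rw [hVV']
      abel
  have hM : Matrix.fromBlocks
        (A + B * ((1 - V⁻¹ * H * V * D)⁻¹ * V⁻¹) * H * V * C)
        (B * ((1 - V⁻¹ * H * V * D)⁻¹ * V⁻¹) * G)
        (F * ((1 - V * D * V⁻¹ * H)⁻¹ * V) * C)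
        (E + F * ((1 - V * D * V⁻¹ * H)⁻¹ * V) * D * V⁻¹ * G)
      = P + Q * N * R := by
    rw [hP, hQ, hR, hN, Matrix.fromBlocks_multiply, Matrix.fromBlocks_multiply,
      Matrix.fromBlocks_add]
    congr 1 <;> simp [Matrix.mul_assoc]
  rw [Matrix.mem_unitaryGroup_iff', star_eq_conjTranspose, hM]
  exact key_unitary P Q R Sd J N bh1 bh2 bh3 bhJ bhSN
end

section
/- Let A be a real symmetric matrix in 2×2 block form [[A₁₁,A₁₂],[A₂₁,A₂₂]] with A positive definite and A - κ·1 positive definite for some κ > 0. Then the Schur complement Â = A₁₁ - A₁₂ A₂₂⁻¹ A₂₁ satisfies Â - κ·1 positive definite. -/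
open Matrix

theorem schur_complement_lower_bound (p q : ℕ) (κ : ℝ) (hκ : 0 < κ)
    (A₁₁ : Matrix (Fin p) (Fin p) ℝ) (A₁₂ : Matrix (Fin p) (Fin q) ℝ)
    (A₂₂ : Matrix (Fin q) (Fin q) ℝ)
    (hA : (Matrix.fromBlocks A₁₁ A₁₂ A₁₂ᵀ A₂₂).PosDef)
    (hlt : (Matrix.fromBlocks A₁₁ A₁₂ A₁₂ᵀ A₂₂
      - κ • (1 : Matrix (Fin p ⊕ Fin q) (Fin p ⊕ Fin q) ℝ)).PosDef) :
    (A₁₁ - A₁₂ * A₂₂⁻¹ * A₁₂ᵀ - κ • (1 : Matrix (Fin p) (Fin p) ℝ)).PosDef := by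
  have hA₂₂ : A₂₂.PosDef := by
    have hherm : A₂₂.IsHermitian := by
      have := hA.1
      rw [isHermitian_fromBlocks_iff] at this
      exact this.2.2.2
    refine Matrix.PosDef.of_dotProduct_mulVec_pos hherm (fun y hy => ?_)
    have hz : (Sum.elim (0 : Fin p → ℝ) y) ≠ 0 := by
      intro h
      apply hy
      funext i
      exact congrFun h (Sum.inr i)
    have := hA.dotProduct_mulVec_pos hz
    simpa [fromBlocks_mulVec, Sum.elim_comp_inl_inr, star_trivial,
      dotProduct_block] using this
  haveI : Invertible A₂₂ := hA₂₂.isUnit.invertible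
  have hA₁₂conj : A₁₂ᴴ = A₁₂ᵀ := conjTranspose_eq_transpose_of_trivial _
  have hherm2 : (A₁₁ - A₁₂ * A₂₂⁻¹ * A₁₂ᵀ - κ • 1 :
      Matrix (Fin p) (Fin p) ℝ).IsHermitian := by
    have h1 : (A₁₁ - A₁₂ * A₂₂⁻¹ * A₁₂ᵀ).IsHermitian := by
      rw [← hA₁₂conj, ← Matrix.IsHermitian.fromBlocks₂₂ _ _ hA₂₂.1, hA₁₂conj]
      exact hA.1
    exact h1.sub (by unfold Matrix.IsHermitian; simp [conjTranspose_smul, star_trivial])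
  refine Matrix.PosDef.of_dotProduct_mulVec_pos hherm2 (fun x hx => ?_)
  set y : Fin q → ℝ := -((A₂₂⁻¹ * A₁₂ᵀ) *ᵥ x) with hy
  have hz : Sum.elim x y ≠ 0 := by
    intro h
    apply hx
    funext i
    exact congrFun h (Sum.inl i)
  have hpos := hlt.dotProduct_mulVec_pos hz
  -- expand the quadratic form
  have key : star (Sum.elim x y) ⬝ᵥ
      (fromBlocks A₁₁ A₁₂ A₁₂ᵀ A₂₂) *ᵥ (Sum.elim x y)
      = star x ⬝ᵥ (A₁₁ - A₁₂ * A₂₂⁻¹ * A₁₂ᵀ) *ᵥ x := by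
    have := Matrix.schur_complement_eq₂₂ (α := ℝ) A₁₁ A₁₂ x y hA₂₂.1
    rw [hA₁₂conj] at this
    rw [dotProduct_mulVec, this]
    have h0 : (A₂₂⁻¹ * A₁₂ᵀ) *ᵥ x + y = 0 := by simp [hy]
    rw [h0]
    simp [dotProduct_mulVec]
  have hsub : star (Sum.elim x y) ⬝ᵥ
      ((fromBlocks A₁₁ A₁₂ A₁₂ᵀ A₂₂ - κ • 1) *ᵥ (Sum.elim x y))
      = star x ⬝ᵥ (A₁₁ - A₁₂ * A₂₂⁻¹ * A₁₂ᵀ) *ᵥ x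
        - κ * (star (Sum.elim x y) ⬝ᵥ Sum.elim x y) := by
    rw [sub_mulVec, dotProduct_sub, key]
    congr 1
    simp [smul_mulVec, dotProduct_smul, smul_eq_mul]
  rw [hsub] at hpos
  have hxx : star (Sum.elim x y) ⬝ᵥ Sum.elim x y
      = star x ⬝ᵥ x + star y ⬝ᵥ y := by
    simp [star_trivial, dotProduct, Fintype.sum_sum_type]
  have hy2 : 0 ≤ star y ⬝ᵥ y := dotProduct_star_self_nonneg y
  have goal_eq : star x ⬝ᵥ (A₁₁ - A₁₂ * A₂₂⁻¹ * A₁₂ᵀ - κ • 1) *ᵥ x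
      = star x ⬝ᵥ (A₁₁ - A₁₂ * A₂₂⁻¹ * A₁₂ᵀ) *ᵥ x - κ * (star x ⬝ᵥ x) := by
    rw [sub_mulVec, dotProduct_sub]
    congr 1
    simp [smul_mulVec, dotProduct_smul, smul_eq_mul]
  rw [goal_eq]
  rw [hxx] at hpos
  nlinarith [hpos, hy2, hκ]
end

section
/- Let X₁, X₂ be real symmetric positive definite matrices with X₁ - κ·1 and X₂ - κ·1 positive definite for some κ > 1, and V an orthogonal p×p matrix. Then the generalized star product X₁ ⋆_V X₂ is well defined (the required matrices are invertible) and satisfies (X₁ ⋆_V X₂) - (κ-1)·1 positive definite; in particular X₁ ⋆_V X₂ is positive definite. -/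
open Matrix

set_option maxHeartbeats 1000000

section Aux

variable {m n : Type*} [Fintype m] [DecidableEq m] [Fintype n] [DecidableEq n]

lemma smul_one_posDef {c : ℝ} (hc : 0 < c) : (c • (1 : Matrix n n ℝ)).PosDef := by
  rw [smul_one_eq_diagonal]
  exact Matrix.PosDef.diagonal fun _ => hc

omit [Fintype n] [DecidableEq n] in
lemma real_isHermitian_iff (M : Matrix n n ℝ) : M.IsHermitian ↔ Mᵀ = M := by
  rw [Matrix.IsHermitian, conjTranspose_eq_transpose_of_trivial]

lemma posDef_sub_one_of {M : Matrix n n ℝ} {κ : ℝ} (hκ : 1 < κ)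
    (h : (M - κ • 1).PosDef) : (M - 1).PosDef := by
  have e : M - 1 = (M - κ • 1) + (κ - 1) • 1 := by
    rw [sub_smul, one_smul]; abel
  rw [e]
  exact h.add_posSemidef (smul_one_posDef (show (0:ℝ) < κ - 1 by linarith)).posSemidef

omit [DecidableEq m] [DecidableEq n] in
lemma posDef_of_blocks₂₂ {A : Matrix m m ℝ} {B : Matrix m n ℝ} {C : Matrix n m ℝ}
    {D : Matrix n n ℝ} (h : (fromBlocks A B C D).PosDef) : D.PosDef := by
  refine Matrix.PosDef.of_dotProduct_mulVec_pos ?_ ?_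
  · exact (isHermitian_fromBlocks_iff.mp h.1).2.2.2
  · intro v hv
    have hx : (Sum.elim (0 : m → ℝ) v) ≠ 0 := by
      intro hc; apply hv; funext i; exact congrFun hc (Sum.inr i)
    have := h.dotProduct_mulVec_pos hx
    simpa [fromBlocks_mulVec, sumElim_dotProduct_sumElim] using this

lemma posDef_conj {P Q : Matrix n n ℝ} (hP : P.PosDef) (hQ : IsUnit Q) :
    (Qᵀ * P * Q).PosDef := by
  have hPt : Pᵀ = P := (real_isHermitian_iff P).mp hP.1
  refine Matrix.PosDef.of_dotProduct_mulVec_pos ?_ ?_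
  · rw [real_isHermitian_iff, transpose_mul, transpose_mul, transpose_transpose, hPt,
      Matrix.mul_assoc]
  · intro x hx
    have hqx : Q *ᵥ x ≠ 0 := by
      intro hc
      apply hx
      have := congrArg (fun v => Q⁻¹ *ᵥ v) hc
      simpa [mulVec_mulVec, Matrix.nonsing_inv_mul Q ((Matrix.isUnit_iff_isUnit_det Q).mp hQ),
        one_mulVec] using this
    have := hP.dotProduct_mulVec_pos hqx
    have e : star x ⬝ᵥ (Qᵀ * P * Q) *ᵥ x = star (Q *ᵥ x) ⬝ᵥ P *ᵥ (Q *ᵥ x) := by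
      rw [star_trivial, star_trivial, dotProduct_mulVec, ← vecMul_vecMul, ← vecMul_vecMul,
        vecMul_transpose, ← dotProduct_mulVec, ← dotProduct_mulVec]
    rw [e]
    exact this

omit [DecidableEq n] in
lemma dp_self_nonneg (v : n → ℝ) : 0 ≤ v ⬝ᵥ v :=
  Finset.sum_nonneg fun _ _ => mul_self_nonneg _

lemma one_sub_inv_posDef {P : Matrix n n ℝ} (hP : P.PosDef) (hP1 : (P - 1).PosDef) :
    (1 - P⁻¹).PosDef := by
  have hdet : IsUnit P.det := hP.det_pos.ne'.isUnit
  refine Matrix.PosDef.of_dotProduct_mulVec_pos ?_ ?_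
  · exact Matrix.isHermitian_one.sub hP.inv.1
  · intro x hx
    set y := P⁻¹ *ᵥ x with hy
    have hxy : x = P *ᵥ y := by
      rw [hy, mulVec_mulVec, Matrix.mul_nonsing_inv _ hdet, one_mulVec]
    have hyne : y ≠ 0 := by
      intro hc; apply hx; rw [hxy, hc, mulVec_zero]
    have ha : 0 < y ⬝ᵥ P *ᵥ y := by simpa [star_trivial] using hP.dotProduct_mulVec_pos hyne
    have hab : y ⬝ᵥ y < y ⬝ᵥ P *ᵥ y := by
      have := hP1.dotProduct_mulVec_pos hyne
      simp only [star_trivial, sub_mulVec, one_mulVec, dotProduct_sub] at this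
      linarith
    have hb : 0 < y ⬝ᵥ y := by simpa [star_trivial] using Matrix.PosDef.one.dotProduct_mulVec_pos hyne
    have hc : 0 ≤ (P *ᵥ y) ⬝ᵥ (P *ᵥ y) := dp_self_nonneg _
    have hcs : (y ⬝ᵥ P *ᵥ y) ^ 2 ≤ (y ⬝ᵥ y) * ((P *ᵥ y) ⬝ᵥ (P *ᵥ y)) := by
      simpa [dotProduct, pow_two] using
        Finset.sum_mul_sq_le_sq_mul_sq Finset.univ y (P *ᵥ y)
    have key : star x ⬝ᵥ (1 - P⁻¹) *ᵥ x = (P *ᵥ y) ⬝ᵥ (P *ᵥ y) - y ⬝ᵥ P *ᵥ y := by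
      rw [star_trivial, sub_mulVec, one_mulVec, dotProduct_sub, ← hy]
      have h1 : x ⬝ᵥ x = (P *ᵥ y) ⬝ᵥ (P *ᵥ y) := by rw [hxy]
      have h2 : x ⬝ᵥ y = y ⬝ᵥ P *ᵥ y := by
        rw [hxy, dotProduct_comm]
      rw [h1, h2]
    rw [key]
    nlinarith [ha, hab, hb, hcs]

lemma swap_inv {X N M : Matrix n n ℝ} (hN : IsUnit N.det) (hM : IsUnit M.det)
    (h : X * N = M * X) : X * N⁻¹ = M⁻¹ * X := by
  calc X * N⁻¹ = M⁻¹ * (M * X) * N⁻¹ := by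
        rw [← Matrix.mul_assoc, Matrix.nonsing_inv_mul _ hM, Matrix.one_mul]
    _ = M⁻¹ * (X * N) * N⁻¹ := by rw [h]
    _ = M⁻¹ * X := by
        rw [Matrix.mul_assoc M⁻¹, Matrix.mul_assoc X, Matrix.mul_nonsing_inv _ hN,
          Matrix.mul_one]

lemma schur_posDef {A : Matrix m m ℝ} (B : Matrix m n ℝ) {D : Matrix n n ℝ}
    (hD : D.PosDef) (h : (fromBlocks A B Bᴴ D).PosDef) :
    (A - B * D⁻¹ * Bᴴ).PosDef := by
  haveI : Invertible D := hD.isUnit.invertible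
  refine Matrix.PosDef.of_dotProduct_mulVec_pos ?_ ?_
  · exact (isHermitian_fromBlocks_iff.mp h.1).1.sub (isHermitian_mul_mul_conjTranspose B hD.inv.1)
  · intro x hx
    set y : n → ℝ := -((D⁻¹ * Bᴴ) *ᵥ x) with hy
    have hne : Sum.elim x y ≠ 0 := by
      intro hc; apply hx; funext i; exact congrFun hc (Sum.inl i)
    have hpos := h.dotProduct_mulVec_pos hne
    rw [dotProduct_mulVec, schur_complement_eq₂₂ A B x y hD.1] at hpos
    have hzero : (D⁻¹ * Bᴴ) *ᵥ x + y = 0 := by rw [hy]; abel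
    rw [hzero] at hpos
    simpa [dotProduct_mulVec] using hpos

omit [DecidableEq m] [DecidableEq n] in
lemma fromBlocks_sub' (A A' : Matrix m m ℝ) (B B' : Matrix m n ℝ) (C C' : Matrix n m ℝ)
    (D D' : Matrix n n ℝ) :
    fromBlocks A B C D - fromBlocks A' B' C' D' =
      fromBlocks (A - A') (B - B') (C - C') (D - D') := by
  simp [sub_eq_add_neg, fromBlocks_neg, fromBlocks_add]

lemma fromBlocks_sub_smul_one (A : Matrix m m ℝ) (B : Matrix m n ℝ) (C : Matrix n m ℝ)
    (D : Matrix n n ℝ) (c : ℝ) :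
    fromBlocks A B C D - c • (1 : Matrix (m ⊕ n) (m ⊕ n) ℝ) =
      fromBlocks (A - c • 1) B C (D - c • 1) := by
  rw [← fromBlocks_one, fromBlocks_smul, fromBlocks_sub']
  simp

omit [DecidableEq m] [DecidableEq n] in
lemma dot_fromBlocks {m' n' : Type*} [Fintype m'] [Fintype n']
    (M₁₁ : Matrix m m' ℝ) (M₁₂ : Matrix m n' ℝ) (M₂₁ : Matrix n m' ℝ) (M₂₂ : Matrix n n' ℝ)
    (u : m → ℝ) (v : n → ℝ) (w : m' → ℝ) (z : n' → ℝ) :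
    Sum.elim u v ⬝ᵥ (fromBlocks M₁₁ M₁₂ M₂₁ M₂₂) *ᵥ Sum.elim w z
      = u ⬝ᵥ M₁₁ *ᵥ w + u ⬝ᵥ M₁₂ *ᵥ z + (v ⬝ᵥ M₂₁ *ᵥ w + v ⬝ᵥ M₂₂ *ᵥ z) := by
  simp [fromBlocks_mulVec, sumElim_dotProduct_sumElim]

end Aux

theorem star_product_posDef (n₁ m₁ p : ℕ) (κ : ℝ) (hκ : 1 < κ)
    (A : Matrix (Fin n₁) (Fin n₁) ℝ) (B : Matrix (Fin n₁) (Fin p) ℝ)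
    (D : Matrix (Fin p) (Fin p) ℝ)
    (E : Matrix (Fin m₁) (Fin m₁) ℝ) (F : Matrix (Fin m₁) (Fin p) ℝ)
    (H : Matrix (Fin p) (Fin p) ℝ)
    (V : Matrix (Fin p) (Fin p) ℝ) (hV : Vᵀ * V = 1)
    (hX₁ : (Matrix.fromBlocks A B Bᵀ D).PosDef)
    (hX₂ : (Matrix.fromBlocks E F Fᵀ H).PosDef)
    (hX₁κ : (Matrix.fromBlocks A B Bᵀ D
      - κ • (1 : Matrix (Fin n₁ ⊕ Fin p) (Fin n₁ ⊕ Fin p) ℝ)).PosDef)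
    (hX₂κ : (Matrix.fromBlocks E F Fᵀ H
      - κ • (1 : Matrix (Fin m₁ ⊕ Fin p) (Fin m₁ ⊕ Fin p) ℝ)).PosDef) :
    IsUnit (1 - V * D * Vᵀ * H) ∧ IsUnit (1 - Vᵀ * H * V * D) ∧
    (Matrix.fromBlocks
        (A + B * ((1 - Vᵀ * H * V * D)⁻¹ * Vᵀ) * H * V * Bᵀ)
        (B * ((1 - Vᵀ * H * V * D)⁻¹ * Vᵀ) * Fᵀ)
        (F * ((1 - V * D * Vᵀ * H)⁻¹ * V) * Bᵀ)
        (E + F * ((1 - V * D * Vᵀ * H)⁻¹ * V) * D * Vᵀ * Fᵀ)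
      - (κ - 1) • (1 : Matrix (Fin n₁ ⊕ Fin m₁) (Fin n₁ ⊕ Fin m₁) ℝ)).PosDef ∧
    (Matrix.fromBlocks
        (A + B * ((1 - Vᵀ * H * V * D)⁻¹ * Vᵀ) * H * V * Bᵀ)
        (B * ((1 - Vᵀ * H * V * D)⁻¹ * Vᵀ) * Fᵀ)
        (F * ((1 - V * D * Vᵀ * H)⁻¹ * V) * Bᵀ)
        (E + F * ((1 - V * D * Vᵀ * H)⁻¹ * V) * D * Vᵀ * Fᵀ)).PosDef := by
  have hκ1 : (0:ℝ) < κ - 1 := by linarith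
  have hV' : V * Vᵀ = 1 := mul_eq_one_comm.mp hV
  have hVdet : IsUnit V.det := by
    apply IsUnit.of_mul_eq_one Vᵀ.det
    rw [mul_comm, ← Matrix.det_mul, hV, Matrix.det_one]
  have hVu : IsUnit V := (Matrix.isUnit_iff_isUnit_det _).mpr hVdet
  have hVtu : IsUnit Vᵀ := by
    refine (Matrix.isUnit_iff_isUnit_det _).mpr ?_
    rwa [Matrix.det_transpose]
  obtain ⟨hAh, -, -, hDh⟩ := isHermitian_fromBlocks_iff.mp hX₁.1
  obtain ⟨hEh, -, -, hHh⟩ := isHermitian_fromBlocks_iff.mp hX₂.1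
  have hAt : Aᵀ = A := (real_isHermitian_iff A).mp hAh
  have hDt : Dᵀ = D := (real_isHermitian_iff D).mp hDh
  have hEt : Eᵀ = E := (real_isHermitian_iff E).mp hEh
  have hHt : Hᵀ = H := (real_isHermitian_iff H).mp hHh
  have hDpd : D.PosDef := posDef_of_blocks₂₂ hX₁
  have hHpd : H.PosDef := posDef_of_blocks₂₂ hX₂
  rw [fromBlocks_sub_smul_one] at hX₁κ hX₂κ
  have hDκ : (D - κ • 1).PosDef := posDef_of_blocks₂₂ hX₁κ
  have hHκ : (H - κ • 1).PosDef := posDef_of_blocks₂₂ hX₂κ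
  have hD1 : (D - 1).PosDef := posDef_sub_one_of hκ hDκ
  have hH1 : (H - 1).PosDef := posDef_sub_one_of hκ hHκ
  have hDi : (1 - D⁻¹).PosDef := one_sub_inv_posDef hDpd hD1
  have hHi : (1 - H⁻¹).PosDef := one_sub_inv_posDef hHpd hH1
  have hPpd : (Vᵀ * H * V).PosDef := posDef_conj hHpd hVu
  have hQpd : (V * D * Vᵀ).PosDef := by
    have := posDef_conj hDpd hVtu
    rwa [transpose_transpose] at this
  have hP1 : (Vᵀ * H * V - 1).PosDef := by
    have h0 := posDef_conj hH1 hVu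
    have e : Vᵀ * (H - 1) * V = Vᵀ * H * V - 1 := by
      rw [Matrix.mul_sub, Matrix.mul_one, Matrix.sub_mul, hV]
    rwa [e] at h0
  have hQ1 : (V * D * Vᵀ - 1).PosDef := by
    have h0 := posDef_conj hD1 hVtu
    have e : Vᵀᵀ * (D - 1) * Vᵀ = V * D * Vᵀ - 1 := by
      rw [transpose_transpose, Matrix.mul_sub, Matrix.mul_one, Matrix.sub_mul, hV']
    rwa [e] at h0
  have hPi : (1 - (Vᵀ * H * V)⁻¹).PosDef := one_sub_inv_posDef hPpd hP1
  have hQi : (1 - (V * D * Vᵀ)⁻¹).PosDef := one_sub_inv_posDef hQpd hQ1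
  have hHQ : (H - (V * D * Vᵀ)⁻¹).PosDef := by
    have e : H - (V * D * Vᵀ)⁻¹ = (H - 1) + (1 - (V * D * Vᵀ)⁻¹) := by abel
    rw [e]; exact hH1.add_posSemidef hQi.posSemidef
  have hDP : (D - (Vᵀ * H * V)⁻¹).PosDef := by
    have e : D - (Vᵀ * H * V)⁻¹ = (D - 1) + (1 - (Vᵀ * H * V)⁻¹) := by abel
    rw [e]; exact hD1.add_posSemidef hPi.posSemidef
  have hPD : (Vᵀ * H * V - D⁻¹).PosDef := by
    have e : Vᵀ * H * V - D⁻¹ = (Vᵀ * H * V - 1) + (1 - D⁻¹) := by abel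
    rw [e]; exact hP1.add_posSemidef hDi.posSemidef
  have hQH : (V * D * Vᵀ - H⁻¹).PosDef := by
    have e : V * D * Vᵀ - H⁻¹ = (V * D * Vᵀ - 1) + (1 - H⁻¹) := by abel
    rw [e]; exact hQ1.add_posSemidef hHi.posSemidef
  -- units
  have hN₁ : IsUnit (1 - V * D * Vᵀ * H) := by
    have e : 1 - V * D * Vᵀ * H = (V * D * Vᵀ) * (-(H - (V * D * Vᵀ)⁻¹)) := by
      rw [Matrix.mul_neg, Matrix.mul_sub, Matrix.mul_nonsing_inv _ hQpd.det_pos.ne'.isUnit,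
        neg_sub]
    rw [e]; exact hQpd.isUnit.mul hHQ.isUnit.neg
  have hN₂ : IsUnit (1 - Vᵀ * H * V * D) := by
    have e : 1 - Vᵀ * H * V * D = (Vᵀ * H * V) * (-(D - (Vᵀ * H * V)⁻¹)) := by
      rw [Matrix.mul_neg, Matrix.mul_sub, Matrix.mul_nonsing_inv _ hPpd.det_pos.ne'.isUnit,
        neg_sub]
    rw [e]; exact hPpd.isUnit.mul hDP.isUnit.neg
  have hN₃ : IsUnit (1 - D * Vᵀ * H * V) := by
    have e : 1 - D * Vᵀ * H * V = D * (-(Vᵀ * H * V - D⁻¹)) := by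
      rw [Matrix.mul_neg, Matrix.mul_sub, Matrix.mul_nonsing_inv _ hDpd.det_pos.ne'.isUnit,
        neg_sub]
      noncomm_ring
    rw [e]; exact hDpd.isUnit.mul hPD.isUnit.neg
  have hN₄ : IsUnit (1 - H * V * D * Vᵀ) := by
    have e : 1 - H * V * D * Vᵀ = H * (-(V * D * Vᵀ - H⁻¹)) := by
      rw [Matrix.mul_neg, Matrix.mul_sub, Matrix.mul_nonsing_inv _ hHpd.det_pos.ne'.isUnit,
        neg_sub]
      noncomm_ring
    rw [e]; exact hHpd.isUnit.mul hQH.isUnit.neg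
  have hN₁d : IsUnit (1 - V * D * Vᵀ * H).det := (Matrix.isUnit_iff_isUnit_det _).mp hN₁
  have hN₂d : IsUnit (1 - Vᵀ * H * V * D).det := (Matrix.isUnit_iff_isUnit_det _).mp hN₂
  have hN₃d : IsUnit (1 - D * Vᵀ * H * V).det := (Matrix.isUnit_iff_isUnit_det _).mp hN₃
  have hN₄d : IsUnit (1 - H * V * D * Vᵀ).det := (Matrix.isUnit_iff_isUnit_det _).mp hN₄
  -- swap identities
  have s₁ : V * (1 - D * Vᵀ * H * V)⁻¹ = (1 - V * D * Vᵀ * H)⁻¹ * V :=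
    swap_inv hN₃d hN₁d (by noncomm_ring)
  have s₂ : Vᵀ * (1 - H * V * D * Vᵀ)⁻¹ = (1 - Vᵀ * H * V * D)⁻¹ * Vᵀ :=
    swap_inv hN₄d hN₂d (by noncomm_ring)
  have s₃ : D * Vᵀ * (1 - H * V * D * Vᵀ)⁻¹ = (1 - D * Vᵀ * H * V)⁻¹ * (D * Vᵀ) :=
    swap_inv hN₄d hN₃d (by noncomm_ring)
  have s₄ : H * V * (1 - D * Vᵀ * H * V)⁻¹ = (1 - H * V * D * Vᵀ)⁻¹ * (H * V) :=
    swap_inv hN₃d hN₄d (by noncomm_ring)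
  have k₁ : (1 - V * D * Vᵀ * H)⁻¹ * V = V * (1 - D * Vᵀ * H * V)⁻¹ := s₁.symm
  have k₂ : (1 - Vᵀ * H * V * D)⁻¹ * Vᵀ = Vᵀ * (1 - H * V * D * Vᵀ)⁻¹ := s₂.symm
  set T : Matrix (Fin p ⊕ Fin p) (Fin p ⊕ Fin p) ℝ := fromBlocks D (-Vᵀ) (-V) H with hTdef
  set Ti : Matrix (Fin p ⊕ Fin p) (Fin p ⊕ Fin p) ℝ :=
    fromBlocks (-((1 - Vᵀ * H * V * D)⁻¹ * Vᵀ * H * V)) (-((1 - Vᵀ * H * V * D)⁻¹ * Vᵀ))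
      (-((1 - V * D * Vᵀ * H)⁻¹ * V)) (-((1 - V * D * Vᵀ * H)⁻¹ * V * D * Vᵀ)) with hTidef
  have hTTi : T * Ti = 1 := by
    rw [hTdef, hTidef, fromBlocks_multiply, ← fromBlocks_one, fromBlocks_inj]
    have e1 : D * ((1 - Vᵀ * H * V * D)⁻¹ * Vᵀ * H * V)
        = (1 - D * Vᵀ * H * V)⁻¹ * (D * Vᵀ * H * V) := by
      rw [k₂]
      calc D * (Vᵀ * (1 - H * V * D * Vᵀ)⁻¹ * H * V)
          = (D * Vᵀ * (1 - H * V * D * Vᵀ)⁻¹) * (H * V) := by noncomm_ring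
        _ = ((1 - D * Vᵀ * H * V)⁻¹ * (D * Vᵀ)) * (H * V) := by rw [s₃]
        _ = (1 - D * Vᵀ * H * V)⁻¹ * (D * Vᵀ * H * V) := by noncomm_ring
    have e2 : Vᵀ * ((1 - V * D * Vᵀ * H)⁻¹ * V) = (1 - D * Vᵀ * H * V)⁻¹ := by
      rw [k₁, ← Matrix.mul_assoc, hV, Matrix.one_mul]
    have e3 : D * ((1 - Vᵀ * H * V * D)⁻¹ * Vᵀ) = (1 - D * Vᵀ * H * V)⁻¹ * (D * Vᵀ) := by
      rw [k₂, ← Matrix.mul_assoc, s₃]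
    have e4 : Vᵀ * ((1 - V * D * Vᵀ * H)⁻¹ * V * D * Vᵀ)
        = (1 - D * Vᵀ * H * V)⁻¹ * (D * Vᵀ) := by
      rw [k₁]
      calc Vᵀ * (V * (1 - D * Vᵀ * H * V)⁻¹ * D * Vᵀ)
          = (Vᵀ * V) * ((1 - D * Vᵀ * H * V)⁻¹ * (D * Vᵀ)) := by noncomm_ring
        _ = (1 - D * Vᵀ * H * V)⁻¹ * (D * Vᵀ) := by rw [hV, Matrix.one_mul]
    have e5 : V * ((1 - Vᵀ * H * V * D)⁻¹ * Vᵀ * H * V)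
        = (1 - H * V * D * Vᵀ)⁻¹ * (H * V) := by
      rw [k₂]
      calc V * (Vᵀ * (1 - H * V * D * Vᵀ)⁻¹ * H * V)
          = (V * Vᵀ) * ((1 - H * V * D * Vᵀ)⁻¹ * (H * V)) := by noncomm_ring
        _ = (1 - H * V * D * Vᵀ)⁻¹ * (H * V) := by rw [hV', Matrix.one_mul]
    have e6 : H * ((1 - V * D * Vᵀ * H)⁻¹ * V) = (1 - H * V * D * Vᵀ)⁻¹ * (H * V) := by
      rw [k₁, ← Matrix.mul_assoc, s₄]
    have e7 : V * ((1 - Vᵀ * H * V * D)⁻¹ * Vᵀ) = (1 - H * V * D * Vᵀ)⁻¹ := by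
      rw [k₂, ← Matrix.mul_assoc, hV', Matrix.one_mul]
    have e8 : H * ((1 - V * D * Vᵀ * H)⁻¹ * V * D * Vᵀ)
        = (1 - H * V * D * Vᵀ)⁻¹ * (H * V * D * Vᵀ) := by
      rw [k₁]
      calc H * (V * (1 - D * Vᵀ * H * V)⁻¹ * D * Vᵀ)
          = (H * V * (1 - D * Vᵀ * H * V)⁻¹) * (D * Vᵀ) := by noncomm_ring
        _ = ((1 - H * V * D * Vᵀ)⁻¹ * (H * V)) * (D * Vᵀ) := by rw [s₄]
        _ = (1 - H * V * D * Vᵀ)⁻¹ * (H * V * D * Vᵀ) := by noncomm_ring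
    refine ⟨?_, ?_, ?_, ?_⟩
    · rw [Matrix.mul_neg, Matrix.mul_neg, Matrix.neg_mul, neg_neg, e1, e2]
      have e : -((1 - D * Vᵀ * H * V)⁻¹ * (D * Vᵀ * H * V)) + (1 - D * Vᵀ * H * V)⁻¹
          = (1 - D * Vᵀ * H * V)⁻¹ * (1 - D * Vᵀ * H * V) := by noncomm_ring
      rw [e, Matrix.nonsing_inv_mul _ hN₃d]
    · rw [Matrix.mul_neg, Matrix.mul_neg, Matrix.neg_mul, neg_neg, e3, e4]
      exact neg_add_cancel _
    · rw [Matrix.mul_neg, Matrix.mul_neg, Matrix.neg_mul, neg_neg, e5, e6]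
      exact add_neg_cancel _
    · rw [Matrix.mul_neg, Matrix.mul_neg, Matrix.neg_mul, neg_neg, e7, e8]
      have e : (1 - H * V * D * Vᵀ)⁻¹ + -((1 - H * V * D * Vᵀ)⁻¹ * (H * V * D * Vᵀ))
          = (1 - H * V * D * Vᵀ)⁻¹ * (1 - H * V * D * Vᵀ) := by noncomm_ring
      rw [e, Matrix.nonsing_inv_mul _ hN₄d]
  have hTi : T⁻¹ = Ti := Matrix.inv_eq_right_inv hTTi
  set G : Matrix (Fin n₁ ⊕ Fin m₁) (Fin n₁ ⊕ Fin m₁) ℝ :=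
    fromBlocks (A - (κ - 1) • 1) 0 0 (E - (κ - 1) • 1) with hGdef
  set L : Matrix (Fin n₁ ⊕ Fin m₁) (Fin p ⊕ Fin p) ℝ := fromBlocks B 0 0 F with hLdef
  have hLt : Lᴴ = fromBlocks Bᵀ 0 0 Fᵀ := by
    rw [hLdef, conjTranspose_eq_transpose_of_trivial, fromBlocks_transpose]
    simp
  have hM' : (fromBlocks G L Lᴴ T).PosDef := by
    refine Matrix.PosDef.of_dotProduct_mulVec_pos ?_ ?_
    · refine isHermitian_fromBlocks_iff.mpr ⟨?_, rfl, conjTranspose_conjTranspose L, ?_⟩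
      · rw [real_isHermitian_iff, hGdef, fromBlocks_transpose]
        simp [transpose_sub, transpose_smul, hAt, hEt]
      · rw [real_isHermitian_iff, hTdef, fromBlocks_transpose]
        simp [transpose_neg, transpose_transpose, hDt, hHt]
    · intro x hx0
      rw [star_trivial]
      set u₁ := fun i => x (Sum.inl (Sum.inl i)) with hu₁
      set u₂ := fun i => x (Sum.inl (Sum.inr i)) with hu₂
      set w₁ := fun i => x (Sum.inr (Sum.inl i)) with hw₁
      set w₂ := fun i => x (Sum.inr (Sum.inr i)) with hw₂
      have hx : x = Sum.elim (Sum.elim u₁ u₂) (Sum.elim w₁ w₂) := by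
        funext i
        rcases i with (i | i) | (i | i) <;> rfl
      have key : x ⬝ᵥ (fromBlocks G L Lᴴ T) *ᵥ x =
          (Sum.elim u₁ w₁ ⬝ᵥ (fromBlocks (A - κ • 1) B Bᵀ (D - κ • 1)) *ᵥ Sum.elim u₁ w₁)
          + (Sum.elim u₂ w₂ ⬝ᵥ (fromBlocks (E - κ • 1) F Fᵀ (H - κ • 1)) *ᵥ Sum.elim u₂ w₂)
          + (u₁ ⬝ᵥ u₁ + u₂ ⬝ᵥ u₂ + κ * (w₁ ⬝ᵥ w₁) + κ * (w₂ ⬝ᵥ w₂)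
            - w₁ ⬝ᵥ Vᵀ *ᵥ w₂ - w₂ ⬝ᵥ V *ᵥ w₁) := by
        rw [hx, hGdef, hLt, hLdef, hTdef]
        simp only [dot_fromBlocks, sub_mulVec, smul_mulVec, one_mulVec, dotProduct_sub,
          dotProduct_smul, smul_eq_mul, zero_mulVec, dotProduct_zero, neg_mulVec,
          dotProduct_neg]
        ring
      have hsplit : Sum.elim u₁ w₁ ≠ 0 ∨ Sum.elim u₂ w₂ ≠ 0 := by
        by_contra hcon
        push_neg at hcon
        obtain ⟨h1, h2⟩ := hcon
        apply hx0
        rw [hx]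
        funext i
        rcases i with (i | i) | (i | i)
        · simpa using congrFun h1 (Sum.inl i)
        · simpa using congrFun h2 (Sum.inl i)
        · simpa using congrFun h1 (Sum.inr i)
        · simpa using congrFun h2 (Sum.inr i)
      have hq1 : 0 ≤ Sum.elim u₁ w₁ ⬝ᵥ (fromBlocks (A - κ • 1) B Bᵀ (D - κ • 1)) *ᵥ
          Sum.elim u₁ w₁ := by
        simpa [star_trivial] using hX₁κ.posSemidef.dotProduct_mulVec_nonneg (Sum.elim u₁ w₁)
      have hq2 : 0 ≤ Sum.elim u₂ w₂ ⬝ᵥ (fromBlocks (E - κ • 1) F Fᵀ (H - κ • 1)) *ᵥ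
          Sum.elim u₂ w₂ := by
        simpa [star_trivial] using hX₂κ.posSemidef.dotProduct_mulVec_nonneg (Sum.elim u₂ w₂)
      have htr : ∀ a b : Fin p → ℝ, (Vᵀ *ᵥ a) ⬝ᵥ b = a ⬝ᵥ (V *ᵥ b) := by
        intro a b
        rw [mulVec_transpose, ← dotProduct_mulVec]
      have hVw : (Vᵀ *ᵥ w₂) ⬝ᵥ (Vᵀ *ᵥ w₂) = w₂ ⬝ᵥ w₂ := by
        rw [htr, mulVec_mulVec, hV', one_mulVec]
      have hcross : (Vᵀ *ᵥ w₂) ⬝ᵥ w₁ = w₂ ⬝ᵥ (V *ᵥ w₁) := htr _ _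
      have hcs : w₁ ⬝ᵥ (Vᵀ *ᵥ w₂) + w₂ ⬝ᵥ (V *ᵥ w₁) ≤ w₁ ⬝ᵥ w₁ + w₂ ⬝ᵥ w₂ := by
        have h0 := dp_self_nonneg (w₁ - Vᵀ *ᵥ w₂)
        simp only [dotProduct_sub, sub_dotProduct, hVw, hcross] at h0
        linarith
      have hnw₁ : 0 ≤ w₁ ⬝ᵥ w₁ := dp_self_nonneg _
      have hnw₂ : 0 ≤ w₂ ⬝ᵥ w₂ := dp_self_nonneg _
      have hnu₁ : 0 ≤ u₁ ⬝ᵥ u₁ := dp_self_nonneg _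
      have hnu₂ : 0 ≤ u₂ ⬝ᵥ u₂ := dp_self_nonneg _
      rw [key]
      rcases hsplit with h | h
      · have hs := hX₁κ.dotProduct_mulVec_pos h
        rw [star_trivial] at hs
        nlinarith [hs, hq2, hcs, hnw₁, hnw₂, hnu₁, hnu₂, hκ1]
      · have hs := hX₂κ.dotProduct_mulVec_pos h
        rw [star_trivial] at hs
        nlinarith [hs, hq1, hcs, hnw₁, hnw₂, hnu₁, hnu₂, hκ1]
  have hTpd : T.PosDef := posDef_of_blocks₂₂ hM'
  have hs := schur_posDef L hTpd hM'
  rw [hTi] at hs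
  have hstar : (Matrix.fromBlocks
        (A + B * ((1 - Vᵀ * H * V * D)⁻¹ * Vᵀ) * H * V * Bᵀ)
        (B * ((1 - Vᵀ * H * V * D)⁻¹ * Vᵀ) * Fᵀ)
        (F * ((1 - V * D * Vᵀ * H)⁻¹ * V) * Bᵀ)
        (E + F * ((1 - V * D * Vᵀ * H)⁻¹ * V) * D * Vᵀ * Fᵀ)
      - (κ - 1) • (1 : Matrix (Fin n₁ ⊕ Fin m₁) (Fin n₁ ⊕ Fin m₁) ℝ)).PosDef := by
    have e : G - L * Ti * Lᴴ = Matrix.fromBlocks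
        (A + B * ((1 - Vᵀ * H * V * D)⁻¹ * Vᵀ) * H * V * Bᵀ)
        (B * ((1 - Vᵀ * H * V * D)⁻¹ * Vᵀ) * Fᵀ)
        (F * ((1 - V * D * Vᵀ * H)⁻¹ * V) * Bᵀ)
        (E + F * ((1 - V * D * Vᵀ * H)⁻¹ * V) * D * Vᵀ * Fᵀ)
      - (κ - 1) • (1 : Matrix (Fin n₁ ⊕ Fin m₁) (Fin n₁ ⊕ Fin m₁) ℝ) := by
      rw [hLt, hLdef, hGdef, hTidef, fromBlocks_multiply, fromBlocks_multiply,
        fromBlocks_sub_smul_one, fromBlocks_sub', fromBlocks_inj]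
      refine ⟨?_, ?_, ?_, ?_⟩ <;>
        · simp only [Matrix.zero_mul, Matrix.mul_zero, Matrix.neg_mul, Matrix.mul_neg, neg_neg,
            neg_zero, add_zero, zero_add, Matrix.mul_assoc, sub_neg_eq_add]
          try abel
    rw [← e]
    exact hs
  refine ⟨hN₁, hN₂, hstar, ?_⟩
  have e2 : Matrix.fromBlocks
        (A + B * ((1 - Vᵀ * H * V * D)⁻¹ * Vᵀ) * H * V * Bᵀ)
        (B * ((1 - Vᵀ * H * V * D)⁻¹ * Vᵀ) * Fᵀ)
        (F * ((1 - V * D * Vᵀ * H)⁻¹ * V) * Bᵀ)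
        (E + F * ((1 - V * D * Vᵀ * H)⁻¹ * V) * D * Vᵀ * Fᵀ)
      = (Matrix.fromBlocks
        (A + B * ((1 - Vᵀ * H * V * D)⁻¹ * Vᵀ) * H * V * Bᵀ)
        (B * ((1 - Vᵀ * H * V * D)⁻¹ * Vᵀ) * Fᵀ)
        (F * ((1 - V * D * Vᵀ * H)⁻¹ * V) * Bᵀ)
        (E + F * ((1 - V * D * Vᵀ * H)⁻¹ * V) * D * Vᵀ * Fᵀ)
      - (κ - 1) • (1 : Matrix (Fin n₁ ⊕ Fin m₁) (Fin n₁ ⊕ Fin m₁) ℝ))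
      + (κ - 1) • (1 : Matrix (Fin n₁ ⊕ Fin m₁) (Fin n₁ ⊕ Fin m₁) ℝ) := by
    abel
  rw [e2]
  exact hstar.add_posSemidef (smul_one_posDef hκ1).posSemidef
end

section
/- Let n = n₁ + p + m₁ + p and let L be the block matrix [[A,B,0,0],[C,D,0,-V⁻¹],[0,0,E,F],[0,-V,G,H]] over ℂ with V invertible. If the 2p×2p submatrix T = [[D,-V⁻¹],[-V,H]] is invertible and L is invertible, then the (n₁+m₁)×(n₁+m₁) matrix K formed from the blocks of L⁻¹ with indices in the external index set {rows/columns corresponding to A and E blocks} equals the inverse of the Schur complement K_G = L_E - L_{E,I} T⁻¹ L_{I,E}, where L_E = diag(A,E), L_{E,I} = diag(B,F), L_{I,E} = diag(C,G). -/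
open Matrix

/-- Reindexing equivalence grouping external indices first, internal second. -/
def extEquiv (n₁ m₁ p : ℕ) :
    ((Fin n₁ ⊕ Fin m₁) ⊕ (Fin p ⊕ Fin p)) ≃ ((Fin n₁ ⊕ Fin p) ⊕ (Fin m₁ ⊕ Fin p)) where
  toFun x := x.elim
    (fun y => y.elim (fun a => Sum.inl (Sum.inl a)) (fun b => Sum.inr (Sum.inl b)))
    (fun y => y.elim (fun q => Sum.inl (Sum.inr q)) (fun q => Sum.inr (Sum.inr q)))
  invFun x := x.elim
    (fun y => y.elim (fun a => Sum.inl (Sum.inl a)) (fun q => Sum.inr (Sum.inl q)))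
    (fun y => y.elim (fun b => Sum.inl (Sum.inr b)) (fun q => Sum.inr (Sum.inr q)))
  left_inv := by rintro ((a | b) | (q | q)) <;> rfl
  right_inv := by rintro ((a | q) | (b | q)) <;> rfl

theorem external_block_of_inverse_eq_schur_inv (n₁ m₁ p : ℕ)
    (A : Matrix (Fin n₁) (Fin n₁) ℂ) (B : Matrix (Fin n₁) (Fin p) ℂ)
    (C : Matrix (Fin p) (Fin n₁) ℂ) (D : Matrix (Fin p) (Fin p) ℂ)
    (E : Matrix (Fin m₁) (Fin m₁) ℂ) (F : Matrix (Fin m₁) (Fin p) ℂ)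
    (G : Matrix (Fin p) (Fin m₁) ℂ) (H : Matrix (Fin p) (Fin p) ℂ)
    (V : Matrix (Fin p) (Fin p) ℂ) (hV : IsUnit V)
    (L : Matrix ((Fin n₁ ⊕ Fin p) ⊕ (Fin m₁ ⊕ Fin p))
      ((Fin n₁ ⊕ Fin p) ⊕ (Fin m₁ ⊕ Fin p)) ℂ)
    (hL : L = Matrix.fromBlocks
        (Matrix.fromBlocks A B C D)
        (Matrix.fromBlocks 0 0 0 (-V⁻¹))
        (Matrix.fromBlocks 0 0 0 (-V))
        (Matrix.fromBlocks E F G H))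
    (hT : IsUnit (Matrix.fromBlocks D (-V⁻¹) (-V) H))
    (hLu : IsUnit L) :
    (Matrix.of fun (i j : Fin n₁ ⊕ Fin m₁) =>
        L⁻¹ (Sum.elim (fun a => Sum.inl (Sum.inl a)) (fun b => Sum.inr (Sum.inl b)) i)
            (Sum.elim (fun a => Sum.inl (Sum.inl a)) (fun b => Sum.inr (Sum.inl b)) j))
      = (Matrix.fromBlocks A 0 0 E
          - Matrix.fromBlocks B 0 0 F
              * (Matrix.fromBlocks D (-V⁻¹) (-V) H)⁻¹
              * Matrix.fromBlocks C 0 0 G)⁻¹ := by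
  set e := extEquiv n₁ m₁ p with he
  set T : Matrix (Fin p ⊕ Fin p) (Fin p ⊕ Fin p) ℂ := Matrix.fromBlocks D (-V⁻¹) (-V) H with hTdef
  set LE : Matrix (Fin n₁ ⊕ Fin m₁) (Fin n₁ ⊕ Fin m₁) ℂ := Matrix.fromBlocks A 0 0 E
  set LEI : Matrix (Fin n₁ ⊕ Fin m₁) (Fin p ⊕ Fin p) ℂ := Matrix.fromBlocks B 0 0 F
  set LIE : Matrix (Fin p ⊕ Fin p) (Fin n₁ ⊕ Fin m₁) ℂ := Matrix.fromBlocks C 0 0 G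
  have hL' : L.submatrix e e = Matrix.fromBlocks LE LEI LIE T := by
    subst hL
    ext i j
    rcases i with (a | b) | (q | q) <;> rcases j with (a' | b') | (q' | q') <;>
      simp [he, extEquiv, Matrix.fromBlocks, LE, LEI, LIE, hTdef]
  haveI iT : Invertible T := hT.invertible
  haveI iL' : Invertible (Matrix.fromBlocks LE LEI LIE T) := by
    rw [← hL']
    exact ((isUnit_submatrix_equiv e e).mpr hLu).invertible
  haveI iS : Invertible (LE - LEI * ⅟T * LIE) :=
    Matrix.invertibleOfFromBlocks₂₂Invertible LE LEI LIE T
  have key : ⅟(Matrix.fromBlocks LE LEI LIE T) =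
      Matrix.fromBlocks (⅟(LE - LEI * ⅟T * LIE)) (-(⅟(LE - LEI * ⅟T * LIE) * LEI * ⅟T))
        (-(⅟T * LIE * ⅟(LE - LEI * ⅟T * LIE)))
        (⅟T + ⅟T * LIE * ⅟(LE - LEI * ⅟T * LIE) * LEI * ⅟T) :=
    Matrix.invOf_fromBlocks₂₂_eq LE LEI LIE T
  have hinv : (L.submatrix e e)⁻¹ = L⁻¹.submatrix e e := Matrix.inv_submatrix_equiv L e e
  have h2 : L⁻¹.submatrix e e =
      Matrix.fromBlocks ((LE - LEI * T⁻¹ * LIE)⁻¹) (-((LE - LEI * T⁻¹ * LIE)⁻¹ * LEI * T⁻¹))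
        (-(T⁻¹ * LIE * (LE - LEI * T⁻¹ * LIE)⁻¹))
        (T⁻¹ + T⁻¹ * LIE * (LE - LEI * T⁻¹ * LIE)⁻¹ * LEI * T⁻¹) := by
    rw [← hinv, hL', ← invOf_eq_nonsing_inv, key,
      invOf_eq_nonsing_inv (LE - LEI * ⅟T * LIE), invOf_eq_nonsing_inv T]
  ext i j
  have := congrFun (congrFun h2 (Sum.inl i)) (Sum.inl j)
  simp only [Matrix.submatrix_apply, Matrix.fromBlocks_apply₁₁] at this
  rcases i with a | b <;> rcases j with a' | b' <;>
    simpa [he, extEquiv] using this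
end
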